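/- Let α be a type, let F = FreeGroup (Option α), let t = FreeGroup.of none, and let A be the image of FreeGroup α in F under FreeGroup.map some (so F is the internal free product of A and the infinite cyclic subgroup generated by t). Let Φ be an automorphism of F with Φ(t) = t and Φ(A) = A, and suppose the restriction Φ|_A is atoroidal. Then for every nontrivial h ∈ F, if Φ^n(h) is conjugate to h in F for some integer n ≥ 1, then h is conjugate in F to a nonzero power of t. -/

import Mathlib

/-!
Write `F = A * ⟨t⟩` and conjugate `h` to a cyclically reduced word `ρ`. If `ρ` only involves `t`,
it is a nonzero power of `t`. If it only involves letters of `A`, then `ρ` and `Φⁿ ρ` are elements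
of `A` that are conjugate in `F`, hence in `A` (apply the retraction `F → A` killing `t`),
contradicting atoroidality. Otherwise a rotation of `ρ` has the form `a g` with `a ∈ A \ {1}` and
`g = t^e₀ a₁ t^e₁ ⋯ aᵣ t^eᵣ`. As `Φ` fixes `t` and preserves `A`, each `Φ^(kn) (a g)` has the same
shape, so it is cyclically reduced, and it is conjugate to `a g`. Cyclically reduced conjugates are
rotations of each other, so there are finitely many of them, and `Φ^(dn)` fixes `a g` for some
`d ≥ 1`. Reading off the first syllable gives `Φ^(dn) a = a`, contradicting atoroidality again.
-/

/-- The restriction of `Φ` to the invariant subgroup `A` is atoroidal: no positive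
power of `Φ` maps a nontrivial element of `A` to a conjugate of itself by an
element of `A`. -/
def RestrictionAtoroidal {F : Type*} [Group F] (Φ : MulAut F) (A : Subgroup F) : Prop :=
  ∀ n : ℕ, 1 ≤ n → ∀ a ∈ A, a ≠ 1 → ¬ ∃ b ∈ A, b * (Φ ^ n) a * b⁻¹ = a

namespace List

variable {γ : Type*} {p : γ → Bool} {L : List γ}

theorem forall_mem_head?_dropWhile (p : γ → Bool) (L : List γ) :
    ∀ x ∈ (L.dropWhile p).head?, p x = false := fun x hx => by
  have := head?_dropWhile_not p L
  rwa [Option.mem_def.1 hx] at this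

theorem takeWhile_ne_nil (hL : L ≠ []) (h : ∀ x ∈ L.head?, p x) : L.takeWhile p ≠ [] := by
  obtain ⟨x, L, rfl⟩ := exists_cons_of_ne_nil hL
  simp [takeWhile_cons_of_pos (h x rfl)]

theorem dropWhile_ne_nil (hL : L ≠ []) (h : ∀ x ∈ L.getLast?, p x = false) :
    L.dropWhile p ≠ [] := fun hnil => by
  simpa [dropWhile_eq_nil_iff.1 hnil _ (getLast_mem hL)] using
    h _ (Option.mem_def.2 (getLast?_eq_some_getLast hL))

theorem exists_isRotated_head?_getLast? (p : γ → Bool) (h₁ : ∃ x ∈ L, p x)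
    (h₂ : ∃ x ∈ L, ¬ p x) :
    ∃ L', L ~r L' ∧ (∀ x ∈ L'.head?, p x) ∧ ∀ x ∈ L'.getLast?, ¬ p x := by
  obtain rfl | ⟨L₀, y, rfl⟩ := eq_nil_or_concat' L
  · simp at h₁
  by_cases hy : p y
  · set Q := (L₀ ++ [y]).reverse.takeWhile p
    set R := (L₀ ++ [y]).reverse.dropWhile p
    have hL : L₀ ++ [y] = R.reverse ++ Q.reverse := by
      rw [← reverse_append, takeWhile_append_dropWhile, reverse_reverse]
    have hQ : Q ≠ [] := by simp [Q, takeWhile_cons_of_pos hy]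
    have hR : R ≠ [] := by
      obtain ⟨x, hx, hpx⟩ := h₂
      exact fun hR => hpx (dropWhile_eq_nil_iff.1 hR x (mem_reverse.2 hx))
    refine ⟨Q.reverse ++ R.reverse, by rw [hL]; exact isRotated_append, ?_, ?_⟩
    · rw [head?_append_of_ne_nil _ (by simpa using hQ), head?_reverse]
      exact fun x hx => mem_takeWhile_imp (mem_of_mem_getLast? hx)
    · rw [getLast?_append_of_ne_nil _ (by simpa using hR), getLast?_reverse]
      exact fun x hx => by simp [forall_mem_head?_dropWhile p _ x hx]
  · set P := (L₀ ++ [y]).takeWhile (! p ·)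
    set D := (L₀ ++ [y]).dropWhile (! p ·)
    have hL : L₀ ++ [y] = P ++ D := takeWhile_append_dropWhile.symm
    have hD : D ≠ [] := by
      obtain ⟨x, hx, hpx⟩ := h₁
      exact fun hD => by simpa [hpx] using dropWhile_eq_nil_iff.1 hD x hx
    refine ⟨D ++ P, by rw [hL]; exact isRotated_append, ?_, ?_⟩
    · rw [head?_append_of_ne_nil _ hD]
      exact fun x hx => by simpa using forall_mem_head?_dropWhile (! p ·) _ x hx
    · rcases eq_or_ne P [] with hP | hP
      · have hDL : D = L₀ ++ [y] := by rw [hL, hP, nil_append]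
        rw [hP, append_nil, hDL]
        simpa using hy
      · rw [getLast?_append_of_ne_nil _ hP]
        exact fun x hx => by simpa using mem_takeWhile_imp (mem_of_mem_getLast? hx)

end List

namespace MulAut

variable {G : Type*} [Group G] {Φ : MulAut G}

theorem pow_apply_eq_self {x : G} (h : Φ x = x) (n : ℕ) : (Φ ^ n) x = x := by
  induction n with
  | zero => rfl
  | succ n ih => rw [pow_succ, mul_apply, h, ih]

theorem pow_apply_mem {H : Subgroup G} (h : ∀ a ∈ H, Φ a ∈ H) (n : ℕ) {a : G} (ha : a ∈ H) :
    (Φ ^ n) a ∈ H := by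
  induction n generalizing a with
  | zero => exact ha
  | succ n ih => rw [pow_succ, mul_apply]; exact ih (h a ha)

theorem isConj_pow_apply {x : G} (h : IsConj (Φ x) x) (n : ℕ) : IsConj ((Φ ^ n) x) x := by
  induction n with
  | zero => rfl
  | succ n ih =>
    rw [pow_succ, mul_apply]
    exact ((Φ ^ n).toMonoidHom.map_isConj h).trans ih

theorem isConj_apply_of_isConj {x y : G} (hxy : IsConj x y) (h : IsConj (Φ x) x) :
    IsConj (Φ y) y :=
  ((Φ.toMonoidHom.map_isConj hxy).symm.trans h).trans hxy

end MulAut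

theorem RestrictionAtoroidal.pow {F : Type*} [Group F] {Φ : MulAut F} {A : Subgroup F}
    (h : RestrictionAtoroidal Φ A) {n : ℕ} (hn : 1 ≤ n) : RestrictionAtoroidal (Φ ^ n) A := by
  intro k hk
  rw [← pow_mul]
  exact h (n * k) (Nat.mul_pos hn hk)

theorem IsConj.of_retraction {G : Type*} [Group G] {H : Subgroup G} (r : G →* H)
    (hr : ∀ h : H, r h = h) {a b : H} (hab : IsConj (a : G) b) : IsConj a b := by
  obtain ⟨c, hc⟩ := isConj_iff.1 hab
  refine isConj_iff.2 ⟨r c, ?_⟩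
  rw [← hr a, ← hr b, ← hc, map_mul, map_mul, map_inv]

namespace FreeGroup

open List

section Words

variable {β : Type*}

theorem isCyclicallyReduced_iff_isReduced_append_self {L : List (β × Bool)} :
    IsCyclicallyReduced L ↔ IsReduced (L ++ L) := by
  rw [IsReduced, isChain_append, isCyclicallyReduced_iff, IsReduced, and_self_left]

theorem IsCyclicallyReduced.append_comm {L₁ L₂ : List (β × Bool)}
    (h : IsCyclicallyReduced (L₁ ++ L₂)) : IsCyclicallyReduced (L₂ ++ L₁) := by
  rw [isCyclicallyReduced_iff_isReduced_append_self]
  exact (h.flatten_replicate 3).isReduced.infix ⟨L₁, L₂, by simp⟩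

theorem IsCyclicallyReduced.isRotated {L L' : List (β × Bool)} (h : IsCyclicallyReduced L)
    (hL : L ~r L') : IsCyclicallyReduced L' := by
  obtain ⟨n, rfl⟩ := hL
  rw [rotate_eq_drop_append_take_mod]
  rw [← take_append_drop (n % L.length) L] at h
  exact h.append_comm

theorem mk_append_invRev (z ρ : List (β × Bool)) :
    mk (z ++ ρ ++ invRev z) = mk z * mk ρ * (mk z)⁻¹ := by
  rw [inv_mk, mul_mk, mul_mk]

theorem mk_cons (x : β × Bool) (L : List (β × Bool)) : mk (x :: L) = mk [x] * mk L := by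
  rw [mul_mk, singleton_append]

theorem mk_singleton_not (b : β) (s : Bool) : mk [(b, !s)] = (mk [(b, s)])⁻¹ := by
  simp [inv_mk, invRev]

theorem isConj_mk_of_isRotated {L L' : List (β × Bool)} (h : L ~r L') :
    IsConj (mk L) (mk L') := by
  obtain ⟨n, rfl⟩ := h
  rw [rotate_eq_drop_append_take_mod]
  conv_lhs => rw [← take_append_drop (n % L.length) L]
  refine isConj_iff.2 ⟨(mk (take (n % L.length) L))⁻¹, ?_⟩
  rw [← mul_mk, ← mul_mk]
  group

theorem getLast?_append_invRev_cons (L z : List (β × Bool)) (w : β × Bool) :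
    (L ++ invRev (w :: z)).getLast? = some (w.1, !w.2) := by
  simp [invRev, getLast?_append]

theorem IsReduced.cons_append_singleton {W : List (β × Bool)} {b : β} {s : Bool}
    (hW : IsReduced W) (hne : W ≠ []) (hhead : ∀ x ∈ W.head?, x ≠ (b, !s))
    (hlast : ∀ x ∈ W.getLast?, x ≠ (b, s)) : IsReduced ((b, s) :: W ++ [(b, !s)]) := by
  rw [cons_append, IsReduced, isChain_cons, head?_append_of_ne_nil _ hne]
  refine ⟨?_, isChain_append.2 ⟨hW, by simp, ?_⟩⟩
  · rintro ⟨x₁, x₂⟩ hx rfl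
    have := hhead _ hx
    cases s <;> cases x₂ <;> simp_all
  · rintro ⟨x₁, x₂⟩ hx _ ⟨⟩ rfl
    have := hlast _ hx
    cases s <;> cases x₂ <;> simp_all

/- Conjugating a reduced word `z ρ z⁻¹` (with `ρ` cyclically reduced) by a letter either cancels
the first letter of `z`, prepends the letter to `z`, or moves a letter of `ρ` to its other end. -/
theorem exists_conj_singleton_eq {ρ z : List (β × Bool)} (hρ : IsCyclicallyReduced ρ)
    (hne : ρ ≠ []) (hred : IsReduced (z ++ ρ ++ invRev z)) (b : β) (s : Bool) :
    ∃ z' ρ', ρ' ~r ρ ∧ IsReduced (z' ++ ρ' ++ invRev z') ∧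
      mk [(b, s)] * mk (z ++ ρ ++ invRev z) * (mk [(b, s)])⁻¹ = mk (z' ++ ρ' ++ invRev z') := by
  cases z with
  | cons w z =>
    by_cases hw : w = (b, !s)
    · subst hw
      refine ⟨z, ρ, IsRotated.refl ρ, hred.infix ⟨[(b, !s)], [(b, s)], by simp [invRev]⟩, ?_⟩
      rw [mk_append_invRev ((b, !s) :: z), mk_append_invRev z, mk_cons (b, !s) z,
        mk_singleton_not]
      group
    · refine ⟨(b, s) :: w :: z, ρ, IsRotated.refl ρ, ?_, ?_⟩
      · have hcons : ((b, s) :: w :: z) ++ ρ ++ invRev ((b, s) :: w :: z)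
            = (b, s) :: ((w :: z) ++ ρ ++ invRev (w :: z)) ++ [(b, !s)] := by
          simp [invRev]
        rw [hcons]
        refine hred.cons_append_singleton (by simp) (by simpa using hw) ?_
        rw [getLast?_append_invRev_cons]
        rintro _ ⟨⟩ h
        obtain ⟨h₁, h₂⟩ := Prod.mk.inj h
        exact hw (Prod.ext h₁ (by simp [← h₂]))
      · rw [mk_append_invRev (w :: z), mk_append_invRev ((b, s) :: w :: z),
          mk_cons (b, s) (w :: z)]
        group
  | nil =>
    simp only [invRev_empty, nil_append, append_nil] at hred ⊢
    by_cases hhead : ρ.head? = some (b, !s)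
    · obtain ⟨T, rfl⟩ := head?_eq_some_iff.1 hhead
      have hrot : T ++ [(b, !s)] ~r (b, !s) :: T := isRotated_append
      refine ⟨[], T ++ [(b, !s)], hrot, by simpa using (hρ.isRotated hrot.symm).isReduced, ?_⟩
      simp only [invRev_empty, nil_append, append_nil]
      rw [mk_cons (b, !s) T, ← mul_mk, mk_singleton_not]
      group
    by_cases hlast : ρ.getLast? = some (b, s)
    · obtain ⟨D, rfl⟩ := getLast?_eq_some_iff.1 hlast
      have hrot : (b, s) :: D ~r D ++ [(b, s)] := isRotated_append (l := [(b, s)])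
      refine ⟨[], (b, s) :: D, hrot, by simpa using (hρ.isRotated hrot.symm).isReduced, ?_⟩
      simp only [invRev_empty, nil_append, append_nil]
      rw [mk_cons (b, s) D, ← mul_mk]
      group
    refine ⟨[(b, s)], ρ, IsRotated.refl ρ, ?_, by rw [mk_append_invRev [(b, s)] ρ]⟩
    simpa [invRev] using hred.cons_append_singleton hne (fun x hx h => hhead (h ▸ hx))
      (fun x hx h => hlast (h ▸ hx))

theorem exists_conj_eq {ρ : List (β × Bool)} (hρ : IsCyclicallyReduced ρ) (hne : ρ ≠ [])
    (u : List (β × Bool)) : ∃ z ρ', ρ' ~r ρ ∧ IsReduced (z ++ ρ' ++ invRev z) ∧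
      mk u * mk ρ * (mk u)⁻¹ = mk (z ++ ρ' ++ invRev z) := by
  induction u with
  | nil => exact ⟨[], ρ, IsRotated.refl ρ, by simpa using hρ.isReduced, by simp [← one_eq_mk]⟩
  | cons l u ih =>
    obtain ⟨z, ρ', hrot, hred, heq⟩ := ih
    obtain ⟨z', ρ'', hrot', hred', heq'⟩ := exists_conj_singleton_eq (hρ.isRotated hrot.symm)
      (by rintro rfl; exact hne (isRotated_nil_iff.1 hrot.symm)) hred l.1 l.2
    refine ⟨z', ρ'', hrot'.trans hrot, hred', ?_⟩
    rw [mk_cons l u, ← heq', ← heq]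
    group

theorem mk_mem_closure_image_of {s : Set β} {L : List (β × Bool)} (h : ∀ l ∈ L, l.1 ∈ s) :
    mk L ∈ Subgroup.closure (of '' s) := by
  induction L with
  | nil => exact one_mem _
  | cons l L ih =>
    rw [mk_cons]
    refine mul_mem ?_ (ih fun l' hl' => h l' (mem_cons_of_mem _ hl'))
    obtain ⟨b, _ | _⟩ := l
    · rw [← Bool.not_true, mk_singleton_not]
      exact inv_mem (Subgroup.subset_closure ⟨b, h _ mem_cons_self, rfl⟩)
    · exact Subgroup.subset_closure ⟨b, h _ mem_cons_self, rfl⟩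

variable [DecidableEq β]

theorem IsReduced.toWord_mk {L : List (β × Bool)} (hL : IsReduced L) : (mk L).toWord = L := by
  rw [FreeGroup.toWord_mk, hL.reduce_eq]

theorem IsReduced.eq_of_mk_eq {L₁ L₂ : List (β × Bool)} (h₁ : IsReduced L₁)
    (h₂ : IsReduced L₂) (h : mk L₁ = mk L₂) : L₁ = L₂ := by
  rw [← h₁.toWord_mk, h, h₂.toWord_mk]

theorem IsReduced.mk_ne_one {L : List (β × Bool)} (hL : IsReduced L) (hne : L ≠ []) :
    mk L ≠ 1 :=
  fun h => hne (hL.eq_of_mk_eq IsReduced.nil (h.trans one_eq_mk))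

theorem IsCyclicallyReduced.isRotated_of_isConj {ρ V : List (β × Bool)}
    (hρ : IsCyclicallyReduced ρ) (hne : ρ ≠ []) (hV : IsCyclicallyReduced V)
    (h : IsConj (mk ρ) (mk V)) : V ~r ρ := by
  obtain ⟨c, hc⟩ := isConj_iff.1 h
  obtain ⟨z, ρ', hrot, hred, heq⟩ := exists_conj_eq hρ hne c.toWord
  rw [mk_toWord, hc] at heq
  obtain rfl := hV.isReduced.eq_of_mk_eq hred heq
  cases z with
  | nil => simpa using hrot
  | cons w z =>
    have := hV.2 _ (getLast?_append_invRev_cons _ z w) w (by simp)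
    simp at this

theorem exists_isCyclicallyReduced_isConj {x : FreeGroup β} (hx : x ≠ 1) :
    ∃ ρ, ρ ≠ [] ∧ IsCyclicallyReduced ρ ∧ IsConj x (mk ρ) := by
  have hρ := reduceCyclically.isCyclicallyReduced (isReduced_toWord (x := x))
  have hx' := congrArg mk (reduceCyclically.conj_conjugator_reduceCyclically x.toWord)
  set ρ := reduceCyclically x.toWord
  set c := reduceCyclically.conjugator x.toWord
  rw [mk_toWord, mk_append_invRev] at hx'
  refine ⟨ρ, fun h => hx ?_, hρ, isConj_iff.2 ⟨(mk c)⁻¹, by rw [← hx']; group⟩⟩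
  rw [← hx', h, ← one_eq_mk, mul_one, mul_inv_cancel]

theorem finite_setOf_isConj_isCyclicallyReduced (x : FreeGroup β) :
    {g | IsConj x g ∧ IsCyclicallyReduced g.toWord}.Finite := by
  rcases eq_or_ne x 1 with rfl | hx
  · exact (Set.finite_singleton 1).subset fun g hg => isConj_one_right.1 hg.1
  obtain ⟨ρ, hne, hρ, hxρ⟩ := exists_isCyclicallyReduced_isConj hx
  refine (ρ.cyclicPermutations.finite_toSet.preimage toWord_injective.injOn).subset
    fun g ⟨hg, hgred⟩ => mem_cyclicPermutations_iff.2 (hρ.isRotated_of_isConj hne hgred ?_)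
  rw [mk_toWord]
  exact hxρ.symm.trans hg

theorem toWord_mul_of_forall_ne {x y : FreeGroup β}
    (h : ∀ a ∈ x.toWord.getLast?, ∀ b ∈ y.toWord.head?, a.1 ≠ b.1) :
    (x * y).toWord = x.toWord ++ y.toWord := by
  have hred : IsReduced (x.toWord ++ y.toWord) := isChain_append.2
    ⟨isReduced_toWord, isReduced_toWord, fun a ha b hb hab => absurd hab (h a ha b hb)⟩
  rw [← hred.toWord_mk, ← mul_mk, mk_toWord, mk_toWord]

theorem mem_closure_image_of_iff {s : Set β} {x : FreeGroup β} :
    x ∈ Subgroup.closure (of '' s) ↔ ∀ l ∈ x.toWord, l.1 ∈ s := by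
  refine ⟨fun hx => ?_, fun h => mk_toWord (x := x) ▸ mk_mem_closure_image_of h⟩
  induction hx using Subgroup.closure_induction with
  | mem x hx =>
    obtain ⟨b, hb, rfl⟩ := hx
    simpa using hb
  | one => simp
  | mul x y _ _ hx hy =>
    intro l hl
    rcases mem_append.1 ((toWord_mul_sublist x y).subset hl) with hl | hl
    exacts [hx l hl, hy l hl]
  | inv x _ hx =>
    intro l hl
    rw [toWord_inv, invRev, mem_reverse, mem_map] at hl
    obtain ⟨l, hl, rfl⟩ := hl
    exact hx l hl

theorem mem_zpowers_of_iff {b : β} {x : FreeGroup β} :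
    x ∈ Subgroup.zpowers (of b) ↔ ∀ l ∈ x.toWord, l.1 = b := by
  rw [Subgroup.zpowers_eq_closure, ← Set.image_singleton, mem_closure_image_of_iff]
  simp only [Set.mem_singleton_iff]

end Words

section Option

variable {α : Type*}

local notation "𝐀" => MonoidHom.range (FreeGroup.map (some : α → Option α))
local notation "𝐭" => FreeGroup.of (none : Option α)

theorem range_map_some_eq_closure : 𝐀 = Subgroup.closure (of '' Set.range some) := by
  rw [MonoidHom.range_eq_map, ← closure_range_of, MonoidHom.map_closure, ← Set.range_comp,
    ← Set.range_comp]
  rfl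

variable (α) in
def retractionMapSome : FreeGroup (Option α) →* 𝐀 :=
  (map some).rangeRestrict.comp (lift fun o => o.elim 1 of)

theorem retractionMapSome_apply (a : 𝐀) : retractionMapSome α a = a := by
  obtain ⟨_, y, rfl⟩ := a
  have : (lift fun o : Option α => o.elim 1 of).comp (map some) = MonoidHom.id _ :=
    ext_hom _ _ fun _ => by simp
  exact Subtype.ext (congrArg (map some) (DFunLike.congr_fun this y))

/-- The elements `t^e₀ a₁ t^e₁ ⋯ aᵣ t^eᵣ` with all `t^eᵢ ≠ 1` and `aᵢ ∈ A \ {1}`, i.e. those whose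
normal form in the free product `A * ⟨t⟩` begins and ends with a power of `t`. -/
inductive IsTBounded : FreeGroup (Option α) → Prop
  | of_mem_zpowers {s : FreeGroup (Option α)} (hs : s ∈ Subgroup.zpowers 𝐭) (hs1 : s ≠ 1) :
      IsTBounded s
  | mul_mul {s a g : FreeGroup (Option α)} (hs : s ∈ Subgroup.zpowers 𝐭) (hs1 : s ≠ 1)
      (ha : a ∈ 𝐀) (ha1 : a ≠ 1) (hg : IsTBounded g) : IsTBounded (s * a * g)

theorem IsTBounded.map {Φ : MulAut (FreeGroup (Option α))} (ht : Φ 𝐭 = 𝐭)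
    (hA : ∀ a ∈ 𝐀, Φ a ∈ 𝐀) {g : FreeGroup (Option α)} (hg : IsTBounded g) :
    IsTBounded (Φ g) := by
  have hzp : ∀ s ∈ Subgroup.zpowers 𝐭, Φ s ∈ Subgroup.zpowers 𝐭 := by
    rintro _ ⟨k, rfl⟩
    exact ⟨k, by simp [ht]⟩
  have hne {x : FreeGroup (Option α)} : x ≠ 1 → Φ x ≠ 1 := (MulEquiv.map_ne_one_iff Φ).2
  induction hg with
  | of_mem_zpowers hs hs1 => exact .of_mem_zpowers (hzp _ hs) (hne hs1)
  | mul_mul hs hs1 ha ha1 _ ih =>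
    rw [_root_.map_mul, _root_.map_mul]
    exact .mul_mul (hzp _ hs) (hne hs1) (hA _ ha) (hne ha1) ih

theorem not_isConj_apply_of_mem {Φ : MulAut (FreeGroup (Option α))} (hA : ∀ a ∈ 𝐀, Φ a ∈ 𝐀)
    (hres : RestrictionAtoroidal Φ 𝐀) {a : FreeGroup (Option α)} (ha : a ∈ 𝐀) (ha1 : a ≠ 1) :
    ¬ IsConj (Φ a) a := by
  intro h
  obtain ⟨c, hc⟩ := isConj_iff.1 <| IsConj.of_retraction (retractionMapSome α)
    retractionMapSome_apply (a := ⟨Φ a, hA a ha⟩) (b := ⟨a, ha⟩) h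
  exact hres 1 le_rfl a ha ha1 ⟨c, c.2, by simpa using congrArg Subtype.val hc⟩

variable [DecidableEq α]

theorem mem_range_map_some_iff {x : FreeGroup (Option α)} :
    x ∈ 𝐀 ↔ ∀ l ∈ x.toWord, l.1.isSome := by
  rw [range_map_some_eq_closure, mem_closure_image_of_iff]
  simp only [Set.mem_range, Option.isSome_iff_exists, @eq_comm _ (some _)]

theorem mem_zpowers_none_iff {x : FreeGroup (Option α)} :
    x ∈ Subgroup.zpowers 𝐭 ↔ ∀ l ∈ x.toWord, l.1.isNone := by
  simp [mem_zpowers_of_iff]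

theorem toWord_mul_of_isSome_of_isNone {x y : FreeGroup (Option α)}
    (hx : ∀ l ∈ x.toWord.getLast?, l.1.isSome) (hy : ∀ l ∈ y.toWord.head?, l.1.isNone) :
    (x * y).toWord = x.toWord ++ y.toWord :=
  toWord_mul_of_forall_ne fun a ha b hb hab => by
    simpa [hab, Option.isNone_iff_eq_none.1 (hy b hb)] using hx a ha

theorem toWord_mul_of_isNone_of_isSome {x y : FreeGroup (Option α)}
    (hx : ∀ l ∈ x.toWord.getLast?, l.1.isNone) (hy : ∀ l ∈ y.toWord.head?, l.1.isSome) :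
    (x * y).toWord = x.toWord ++ y.toWord :=
  toWord_mul_of_forall_ne fun a ha b hb hab => by
    simpa [← hab, Option.isNone_iff_eq_none.1 (hx a ha)] using hy b hb

theorem IsTBounded.toWord_ne_nil_head?_getLast? {g : FreeGroup (Option α)}
    (hg : IsTBounded g) : g.toWord ≠ [] ∧ (∀ l ∈ g.toWord.head?, l.1.isNone) ∧
      ∀ l ∈ g.toWord.getLast?, l.1.isNone := by
  induction hg with
  | of_mem_zpowers hs hs1 =>
    have hs' := mem_zpowers_none_iff.1 hs
    exact ⟨toWord_eq_nil_iff.not.2 hs1, fun l hl => hs' l (mem_of_mem_head? hl),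
      fun l hl => hs' l (mem_of_mem_getLast? hl)⟩
  | @mul_mul s a g hs hs1 ha ha1 _ ih =>
    obtain ⟨hgne, hghead, hglast⟩ := ih
    have hs' := mem_zpowers_none_iff.1 hs
    have ha' := mem_range_map_some_iff.1 ha
    have hsne : s.toWord ≠ [] := toWord_eq_nil_iff.not.2 hs1
    have hane : a.toWord ≠ [] := toWord_eq_nil_iff.not.2 ha1
    have hsa : (s * a).toWord = s.toWord ++ a.toWord :=
      toWord_mul_of_isNone_of_isSome (fun l hl => hs' l (mem_of_mem_getLast? hl))
        (fun l hl => ha' l (mem_of_mem_head? hl))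
    have hsag : (s * a * g).toWord = s.toWord ++ a.toWord ++ g.toWord := by
      rw [toWord_mul_of_isSome_of_isNone _ hghead, hsa]
      rw [hsa, getLast?_append_of_ne_nil _ hane]
      exact fun l hl => ha' l (mem_of_mem_getLast? hl)
    rw [hsag, getLast?_append_of_ne_nil _ hgne, append_assoc, head?_append_of_ne_nil _ hsne]
    exact ⟨by simp [hsne], fun l hl => hs' l (mem_of_mem_head? hl), hglast⟩

theorem isTBounded_mk {W : List (Option α × Bool)} (hW : IsReduced W) (hne : W ≠ [])
    (hhead : ∀ l ∈ W.head?, l.1.isNone) (hlast : ∀ l ∈ W.getLast?, l.1.isNone) :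
    IsTBounded (mk W) := by
  induction hlen : W.length using Nat.strong_induction_on generalizing W with
  | _ n ih =>
  set N := W.takeWhile (·.1.isNone)
  set R := W.dropWhile (·.1.isNone)
  have hWNR : W = N ++ R := takeWhile_append_dropWhile.symm
  have hN : N ≠ [] := takeWhile_ne_nil hne hhead
  have hNred : IsReduced N := hW.infix ⟨[], R, by rw [nil_append, ← hWNR]⟩
  have hs : mk N ∈ Subgroup.zpowers 𝐭 :=
    mem_zpowers_none_iff.2 (by rw [hNred.toWord_mk]; exact fun l => mem_takeWhile_imp)
  rcases eq_or_ne R [] with hR | hR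
  · rw [hWNR, hR, append_nil]
    exact .of_mem_zpowers hs (hNred.mk_ne_one hN)
  set S := R.takeWhile (·.1.isSome)
  set W' := R.dropWhile (·.1.isSome)
  have hRSW : R = S ++ W' := takeWhile_append_dropWhile.symm
  have hWsplit : W = N ++ S ++ W' := by rw [hWNR, hRSW, append_assoc]
  have hS : S ≠ [] := takeWhile_ne_nil hR fun l hl => by
    simpa [Option.not_isSome] using forall_mem_head?_dropWhile _ W l hl
  have hW' : W' ≠ [] := dropWhile_ne_nil hR fun l hl => by
    rw [hWNR, getLast?_append_of_ne_nil _ hR] at hlast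
    simpa [Option.not_isSome] using hlast l hl
  have hSred : IsReduced S := hW.infix ⟨N, W', hWsplit.symm⟩
  have hW'red : IsReduced W' := hW.infix ⟨N ++ S, [], by rw [append_nil, hWsplit]⟩
  have hlen' : W'.length < n := by
    rw [← hlen, hWsplit, length_append, length_append]
    have := length_pos_of_ne_nil hN
    omega
  have hg := ih _ hlen' hW'red hW'
    (fun l hl => by simpa [Option.not_isSome] using forall_mem_head?_dropWhile _ R l hl)
    (by rwa [hWsplit, getLast?_append_of_ne_nil _ hW'] at hlast) rfl
  have ha : mk S ∈ 𝐀 :=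
    mem_range_map_some_iff.2 (by rw [hSred.toWord_mk]; exact fun l => mem_takeWhile_imp)
  rw [hWsplit, ← mul_mk, ← mul_mk]
  exact .mul_mul hs (hNred.mk_ne_one hN) ha (hSred.mk_ne_one hS) hg

theorem takeWhile_toWord_mul_of_isTBounded {a g : FreeGroup (Option α)} (ha : a ∈ 𝐀)
    (hg : IsTBounded g) : (a * g).toWord.takeWhile (·.1.isSome) = a.toWord := by
  have ha' := mem_range_map_some_iff.1 ha
  obtain ⟨hgne, hghead, -⟩ := hg.toWord_ne_nil_head?_getLast?
  rw [toWord_mul_of_isSome_of_isNone (fun l hl => ha' l (mem_of_mem_getLast? hl)) hghead,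
    takeWhile_append_of_pos ha', append_right_eq_self]
  obtain ⟨x, L, hxL⟩ := exists_cons_of_ne_nil hgne
  rw [hxL] at hghead ⊢
  simp [Option.isNone_iff_eq_none.1 (hghead x rfl)]

theorem eq_of_mul_eq_mul_of_isTBounded {a a' g g' : FreeGroup (Option α)} (ha : a ∈ 𝐀)
    (ha' : a' ∈ 𝐀) (hg : IsTBounded g) (hg' : IsTBounded g') (h : a * g = a' * g') : a = a' :=
  toWord_injective <| by
    rw [← takeWhile_toWord_mul_of_isTBounded ha hg, h, takeWhile_toWord_mul_of_isTBounded ha' hg']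

theorem isCyclicallyReduced_toWord_mul {a g : FreeGroup (Option α)} (ha : a ∈ 𝐀) (ha1 : a ≠ 1)
    (hg : IsTBounded g) : IsCyclicallyReduced (a * g).toWord := by
  have ha' := mem_range_map_some_iff.1 ha
  obtain ⟨hgne, hghead, hglast⟩ := hg.toWord_ne_nil_head?_getLast?
  refine ⟨isReduced_toWord, fun x hx y hy hxy => ?_⟩
  rw [toWord_mul_of_isSome_of_isNone (fun l hl => ha' l (mem_of_mem_getLast? hl)) hghead]
    at hx hy
  rw [getLast?_append_of_ne_nil _ hgne] at hx
  rw [head?_append_of_ne_nil _ (toWord_eq_nil_iff.not.2 ha1)] at hy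
  have := ha' y (mem_of_mem_head? hy)
  simp [← hxy, Option.isNone_iff_eq_none.1 (hglast x hx)] at this

theorem exists_isConj_mul_isTBounded {ρ : List (Option α × Bool)} (hρ : IsCyclicallyReduced ρ)
    (hsome : ∃ l ∈ ρ, l.1.isSome) (hnone : ∃ l ∈ ρ, ¬ l.1.isSome) :
    ∃ a ∈ 𝐀, a ≠ 1 ∧ ∃ g, IsTBounded g ∧ IsConj (mk ρ) (a * g) := by
  obtain ⟨ρ', hrot, hhead, hlast⟩ :=
    exists_isRotated_head?_getLast? (fun l : Option α × Bool => l.1.isSome) hsome hnone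
  have hred := (hρ.isRotated hrot).isReduced
  have hne : ρ' ≠ [] := by
    rintro rfl
    obtain ⟨l, hl, -⟩ := hsome
    simp [isRotated_nil_iff.1 hrot] at hl
  set S := ρ'.takeWhile (·.1.isSome)
  set W := ρ'.dropWhile (·.1.isSome)
  have hsplit : ρ' = S ++ W := takeWhile_append_dropWhile.symm
  have hS : S ≠ [] := takeWhile_ne_nil hne hhead
  have hW : W ≠ [] := dropWhile_ne_nil hne fun l hl => by simpa using hlast l hl
  have hSred : IsReduced S := hred.infix ⟨[], W, by rw [nil_append, ← hsplit]⟩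
  have hWred : IsReduced W := hred.infix ⟨S, [], by rw [append_nil, ← hsplit]⟩
  have ha : mk S ∈ 𝐀 :=
    mem_range_map_some_iff.2 (by rw [hSred.toWord_mk]; exact fun l => mem_takeWhile_imp)
  refine ⟨mk S, ha, hSred.mk_ne_one hS, mk W, isTBounded_mk hWred hW ?_ ?_, ?_⟩
  · exact fun l hl => by simpa [Option.not_isSome] using forall_mem_head?_dropWhile _ ρ' l hl
  · rw [hsplit, getLast?_append_of_ne_nil _ hW] at hlast
    exact fun l hl => by simpa [Option.not_isSome] using hlast l hl
  · rw [mul_mk, ← hsplit]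
    exact isConj_mk_of_isRotated hrot

theorem not_isConj_apply_mul_of_isTBounded {Φ : MulAut (FreeGroup (Option α))} (ht : Φ 𝐭 = 𝐭)
    (hA : ∀ a ∈ 𝐀, Φ a ∈ 𝐀) (hres : RestrictionAtoroidal Φ 𝐀) {a g : FreeGroup (Option α)}
    (ha : a ∈ 𝐀) (ha1 : a ≠ 1) (hg : IsTBounded g) : ¬ IsConj (Φ (a * g)) (a * g) := by
  intro hconj
  have hgk (k : ℕ) : IsTBounded ((Φ ^ k) g) :=
    hg.map (MulAut.pow_apply_eq_self ht k) fun b hb => MulAut.pow_apply_mem hA k hb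
  have horbit (k : ℕ) :
      (Φ ^ k) (a * g) ∈ {y | IsConj (a * g) y ∧ IsCyclicallyReduced y.toWord} := by
    refine ⟨(MulAut.isConj_pow_apply hconj k).symm, ?_⟩
    rw [_root_.map_mul]
    exact isCyclicallyReduced_toWord_mul (MulAut.pow_apply_mem hA k ha)
      ((MulEquiv.map_ne_one_iff _).2 ha1) (hgk k)
  obtain ⟨m, n, hmn, heq⟩ :=
    (finite_setOf_isConj_isCyclicallyReduced (a * g)).exists_lt_map_eq_of_forall_mem horbit
  have hfix : (Φ ^ (n - m)) (a * g) = a * g := by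
    apply (Φ ^ m).injective
    rw [← MulAut.mul_apply, ← pow_add, Nat.add_sub_cancel' hmn.le]
    exact heq.symm
  rw [_root_.map_mul] at hfix
  have hafix := eq_of_mul_eq_mul_of_isTBounded (MulAut.pow_apply_mem hA _ ha) ha (hgk _) hg hfix
  exact hres (n - m) (by omega) a ha ha1 ⟨1, one_mem _, by rw [hafix]; group⟩

theorem exists_isConj_zpow_of_isConj_apply {Φ : MulAut (FreeGroup (Option α))} (ht : Φ 𝐭 = 𝐭)
    (hA : ∀ a ∈ 𝐀, Φ a ∈ 𝐀) (hres : RestrictionAtoroidal Φ 𝐀) {h : FreeGroup (Option α)}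
    (hne : h ≠ 1) (hconj : IsConj (Φ h) h) : ∃ m : ℤ, m ≠ 0 ∧ IsConj h (𝐭 ^ m) := by
  obtain ⟨ρ, hρne, hρ, hhρ⟩ := exists_isCyclicallyReduced_isConj hne
  have hρconj := MulAut.isConj_apply_of_isConj hhρ hconj
  have hρ1 : mk ρ ≠ 1 := hρ.isReduced.mk_ne_one hρne
  by_cases hsome : ∃ l ∈ ρ, l.1.isSome
  · exfalso
    by_cases hnone : ∃ l ∈ ρ, ¬ l.1.isSome
    · obtain ⟨a, ha, ha1, g, hg, hρag⟩ := exists_isConj_mul_isTBounded hρ hsome hnone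
      exact not_isConj_apply_mul_of_isTBounded ht hA hres ha ha1 hg
        (MulAut.isConj_apply_of_isConj hρag hρconj)
    · push Not at hnone
      have hmem : mk ρ ∈ 𝐀 :=
        mem_range_map_some_iff.2 (by rw [hρ.isReduced.toWord_mk]; simpa using hnone)
      exact not_isConj_apply_of_mem hA hres hmem hρ1 hρconj
  · push Not at hsome
    obtain ⟨e, he⟩ := Subgroup.mem_zpowers_iff.1 <|
      mem_zpowers_none_iff.2 (by rw [hρ.isReduced.toWord_mk]; simpa using hsome)
    refine ⟨e, ?_, he ▸ hhρ⟩
    rintro rfl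
    exact hρ1 (by rw [← he, zpow_zero])

end Option

end FreeGroup

/-- Let `F = FreeGroup (Option α)`, `t` the generator `of none`, and `A` the image
of `FreeGroup α` under `FreeGroup.map some`. If `Φ` is an automorphism of `F`
fixing `t`, preserving `A`, and restricting to an atoroidal automorphism of `A`,
then every nontrivial element with periodic conjugacy class is conjugate to a
nonzero power of `t`. -/
theorem statement_11 {α : Type*}
    (Φ : MulAut (FreeGroup (Option α)))
    (ht : Φ (FreeGroup.of (none : Option α)) = FreeGroup.of (none : Option α))
    (hA : ((FreeGroup.map (some : α → Option α)).range).map Φ.toMonoidHom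
        = (FreeGroup.map (some : α → Option α)).range)
    (hres : RestrictionAtoroidal Φ (FreeGroup.map (some : α → Option α)).range) :
    ∀ h : FreeGroup (Option α), h ≠ 1 →
      (∃ n : ℕ, 1 ≤ n ∧ IsConj ((Φ ^ n) h) h) →
      ∃ m : ℤ, m ≠ 0 ∧ IsConj h (FreeGroup.of (none : Option α) ^ m) := by
  classical
  rintro h hne ⟨n, hn, hconj⟩
  have hΦA (a) (ha : a ∈ (FreeGroup.map (some : α → Option α)).range) :
      Φ a ∈ (FreeGroup.map some).range :=
    hA ▸ Subgroup.mem_map_of_mem Φ.toMonoidHom ha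
  exact FreeGroup.exists_isConj_zpow_of_isConj_apply (MulAut.pow_apply_eq_self ht n)
    (fun _ => MulAut.pow_apply_mem hΦA n) (hres.pow hn) hne hconj
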